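/- Let m₀, ℓ, n be positive integers with n ≥ 3 and ℓ | n, and let k be a unit modulo n with k^{m₀} ≡ 1 (mod n) and n | ℓ(k−1). Let G_{m₀,ℓ,n,k} be the metacyclic group with presentation ⟨x, y | x^{m₀} = y^ℓ, y^n = 1, x⁻¹yx = y^k⟩. Then there is a surjective group homomorphism from the split metacyclic group G_{m₀n/ℓ, n, k} onto G_{m₀,ℓ,n,k} sending x ↦ x and y ↦ y, and consequently diam(G_{m₀,ℓ,n,k}) ≤ diam(G_{m₀n/ℓ, n, k}), where both diameters are taken with respect to the generating set {x, x⁻¹, y, y⁻¹}. -/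

import Mathlib

/-- Relators of the split metacyclic group `⟨x, y | x^m = y^n = 1, x⁻¹yx = y^k⟩`,
with generator `0` playing the role of `x` and `1` that of `y`. -/
def metacyclicRels (m n k : ℕ) : Set (FreeGroup (Fin 2)) :=
  { FreeGroup.of 0 ^ m, FreeGroup.of 1 ^ n,
    (FreeGroup.of 0)⁻¹ * FreeGroup.of 1 * FreeGroup.of 0 * (FreeGroup.of 1 ^ k)⁻¹ }

/-- The split metacyclic group `G_{m,n,k} = ℤ_m ⋉_k ℤ_n
  = ⟨x, y | x^m = y^n = 1, x⁻¹yx = y^k⟩`. -/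
abbrev SplitMetacyclic (m n k : ℕ) : Type := PresentedGroup (metacyclicRels m n k)

/-- The generator `x` of `G_{m,n,k}`. -/
def xgen (m n k : ℕ) : SplitMetacyclic m n k := PresentedGroup.of 0

/-- The generator `y` of `G_{m,n,k}`. -/
def ygen (m n k : ℕ) : SplitMetacyclic m n k := PresentedGroup.of 1

/-- The word norm of `g` with respect to a set `S` of generators:
the least `t` such that `g` is a product of `t` elements of `S`. -/
noncomputable def wordNorm {G : Type*} [Group G] (S : Set G) (g : G) : ℕ :=
  sInf { t | ∃ w : List G, (∀ u ∈ w, u ∈ S) ∧ w.length = t ∧ w.prod = g }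

/-- The diameter of a group with respect to a set `S` of generators. -/
noncomputable def diam {G : Type*} [Group G] (S : Set G) : ℕ :=
  ⨆ g : G, wordNorm S g

/-- The generating set `{x, x⁻¹, y, y⁻¹}` of `G_{m,n,k}`. -/
def genSet (m n k : ℕ) : Set (SplitMetacyclic m n k) :=
  {xgen m n k, (xgen m n k)⁻¹, ygen m n k, (ygen m n k)⁻¹}

/-- Relators of the general metacyclic group
`⟨x, y | x^{m₀} = y^ℓ, y^n = 1, x⁻¹yx = y^k⟩`. -/
def metacyclicRels' (m₀ l n k : ℕ) : Set (FreeGroup (Fin 2)) :=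
  { FreeGroup.of 0 ^ m₀ * (FreeGroup.of 1 ^ l)⁻¹, FreeGroup.of 1 ^ n,
    (FreeGroup.of 0)⁻¹ * FreeGroup.of 1 * FreeGroup.of 0 * (FreeGroup.of 1 ^ k)⁻¹ }

/-- The metacyclic group `G_{m₀,ℓ,n,k} = ⟨x, y | x^{m₀} = y^ℓ, y^n = 1, x⁻¹yx = y^k⟩`. -/
abbrev Metacyclic (m₀ l n k : ℕ) : Type := PresentedGroup (metacyclicRels' m₀ l n k)

/-- The generator `x` of `G_{m₀,ℓ,n,k}`. -/
def xgen' (m₀ l n k : ℕ) : Metacyclic m₀ l n k := PresentedGroup.of 0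

/-- The generator `y` of `G_{m₀,ℓ,n,k}`. -/
def ygen' (m₀ l n k : ℕ) : Metacyclic m₀ l n k := PresentedGroup.of 1

/-- The generating set `{x, x⁻¹, y, y⁻¹}` of `G_{m₀,ℓ,n,k}`. -/
def genSet' (m₀ l n k : ℕ) : Set (Metacyclic m₀ l n k) :=
  {xgen' m₀ l n k, (xgen' m₀ l n k)⁻¹, ygen' m₀ l n k, (ygen' m₀ l n k)⁻¹}

/-!
In `G_{m₀,ℓ,n,k}` we have `x^{m₀n/ℓ} = (x^{m₀})^{n/ℓ} = y^{ℓ · n/ℓ} = 1`, so all relators of the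
split group `G_{m₀n/ℓ,n,k}` hold there and `x ↦ x, y ↦ y` is a surjective homomorphism.
A word in `{x^{±1}, y^{±1}}` maps to a word of the same length, so word norms can only drop.
Since `diam` is a supremum in `ℕ` (junk value `0` when unbounded), the comparison needs the norms
of the split group to be bounded: it is finite, because `y x = x y^k` lets every element be
written as `x^a y^b`.
-/

open scoped Pointwise

section WordNorm

variable {G H : Type*} [Group G] [Group H]

theorem wordNorm_map_le (f : G →* H) {S : Set G} {T : Set H} (hST : Set.MapsTo f S T)
    {g : G} (hg : g ∈ Submonoid.closure S) : wordNorm T (f g) ≤ wordNorm S g := by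
  obtain ⟨w, hwS, hw⟩ := Submonoid.exists_list_of_mem_closure hg
  obtain ⟨v, hvS, hv_len, hv_prod⟩ :=
    Nat.sInf_mem (s := {t | ∃ w : List G, (∀ u ∈ w, u ∈ S) ∧ w.length = t ∧ w.prod = g})
      ⟨w.length, w, hwS, rfl, hw⟩
  refine Nat.sInf_le ⟨v.map f, ?_, by rw [List.length_map, hv_len, wordNorm], ?_⟩
  · simp only [List.mem_map, forall_exists_index, and_imp, forall_apply_eq_imp_iff₂]
    exact fun u hu => hST (hvS u hu)
  · rw [← hv_prod, map_list_prod]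

theorem diam_le_diam_of_surjective [Finite G] (f : G →* H) (hf : Function.Surjective f)
    {S : Set G} {T : Set H} (hST : Set.MapsTo f S T) (hS : Submonoid.closure S = ⊤) :
    diam T ≤ diam S := by
  refine ciSup_le fun h => ?_
  obtain ⟨g, rfl⟩ := hf h
  calc wordNorm T (f g) ≤ wordNorm S g := wordNorm_map_le f hST (hS ▸ Submonoid.mem_top g)
    _ ≤ diam S := le_ciSup (Set.finite_range _).bddAbove g

end WordNorm

theorem mem_powers_mul_powers_of_mul_eq {M : Type*} [Monoid M] {x y : M} {k : ℕ}
    (hyx : y * x = x * y ^ k) {g : M} (hg : g ∈ Submonoid.closure {x, y}) :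
    g ∈ (Submonoid.powers x : Set M) * Submonoid.powers y := by
  induction hg using Submonoid.closure_induction_right with
  | one => exact ⟨1, one_mem _, 1, one_mem _, one_mul 1⟩
  | mul_right g _ z hz ih =>
    obtain ⟨_, ⟨a, rfl⟩, _, ⟨b, rfl⟩, rfl⟩ := ih
    rcases hz with hz | hz <;> rw [hz]
    · refine ⟨x ^ (a + 1), ⟨a + 1, rfl⟩, (y ^ k) ^ b, ⟨k * b, pow_mul y k b⟩, ?_⟩
      show x ^ (a + 1) * (y ^ k) ^ b = x ^ a * y ^ b * x
      rw [pow_succ, mul_assoc, (SemiconjBy.pow_right hyx.symm b).eq, mul_assoc]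
    · exact ⟨x ^ a, ⟨a, rfl⟩, y ^ (b + 1), ⟨b + 1, rfl⟩, by rw [pow_succ, mul_assoc]⟩

theorem finite_of_closure_pair_eq_top {G : Type*} [Group G] {x y : G} {k : ℕ}
    (hx : IsOfFinOrder x) (hy : IsOfFinOrder y) (hyx : y * x = x * y ^ k)
    (hxy : Subgroup.closure {x, y} = ⊤) : Finite G := by
  have hfin : ((Submonoid.powers x : Set G) * Submonoid.powers y).Finite :=
    hx.finite_powers.mul hy.finite_powers
  refine Set.finite_univ_iff.mp (hfin.subset fun g _ => mem_powers_mul_powers_of_mul_eq hyx ?_)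
  rw [← Subgroup.closure_toSubmonoid_of_isOfFinOrder (by simp [hx, hy]), hxy]
  exact Subgroup.mem_top g

namespace SplitMetacyclic

variable (m n k : ℕ)

theorem xgen_pow : xgen m n k ^ m = 1 := by
  have h := PresentedGroup.one_of_mem (rels := metacyclicRels m n k) (x := .of 0 ^ m)
    (by simp [metacyclicRels])
  rwa [map_pow] at h

theorem ygen_pow : ygen m n k ^ n = 1 := by
  have h := PresentedGroup.one_of_mem (rels := metacyclicRels m n k) (x := .of 1 ^ n)
    (by simp [metacyclicRels])
  rwa [map_pow] at h

theorem inv_xgen_mul_ygen_mul_xgen :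
    (xgen m n k)⁻¹ * ygen m n k * xgen m n k = ygen m n k ^ k := by
  have h := PresentedGroup.mk_eq_mk_of_mul_inv_mem (rels := metacyclicRels m n k)
    (x := (.of 0)⁻¹ * .of 1 * .of 0) (y := .of 1 ^ k) (by simp [metacyclicRels])
  rwa [map_mul, map_mul, map_inv, map_pow] at h

theorem ygen_mul_xgen : ygen m n k * xgen m n k = xgen m n k * ygen m n k ^ k := by
  rw [← inv_xgen_mul_ygen_mul_xgen]
  group

theorem closure_xgen_ygen : Subgroup.closure {xgen m n k, ygen m n k} = ⊤ := by
  rw [← PresentedGroup.closure_range_of]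
  congr 1
  ext g
  simp [Fin.exists_fin_two, xgen, ygen, eq_comm]

theorem submonoid_closure_genSet : Submonoid.closure (genSet m n k) = ⊤ := by
  rw [eq_top_iff, ← Subgroup.top_toSubmonoid, ← closure_xgen_ygen, Subgroup.closure_toSubmonoid]
  refine Submonoid.closure_mono ?_
  simp [genSet, Set.insert_subset_iff]

theorem finite {m n : ℕ} (hm : 0 < m) (hn : 0 < n) : Finite (SplitMetacyclic m n k) :=
  finite_of_closure_pair_eq_top (isOfFinOrder_iff_pow_eq_one.mpr ⟨m, hm, xgen_pow m n k⟩)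
    (isOfFinOrder_iff_pow_eq_one.mpr ⟨n, hn, ygen_pow m n k⟩) (ygen_mul_xgen m n k)
    (closure_xgen_ygen m n k)

end SplitMetacyclic

namespace Metacyclic

variable (m₀ l n k : ℕ)

theorem xgen'_pow : xgen' m₀ l n k ^ m₀ = ygen' m₀ l n k ^ l := by
  have h := PresentedGroup.mk_eq_mk_of_mul_inv_mem (rels := metacyclicRels' m₀ l n k)
    (x := .of 0 ^ m₀) (y := .of 1 ^ l) (by simp [metacyclicRels'])
  rwa [map_pow, map_pow] at h

theorem ygen'_pow : ygen' m₀ l n k ^ n = 1 := by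
  have h := PresentedGroup.one_of_mem (rels := metacyclicRels' m₀ l n k) (x := .of 1 ^ n)
    (by simp [metacyclicRels'])
  rwa [map_pow] at h

theorem inv_xgen'_mul_ygen'_mul_xgen' :
    (xgen' m₀ l n k)⁻¹ * ygen' m₀ l n k * xgen' m₀ l n k = ygen' m₀ l n k ^ k := by
  have h := PresentedGroup.mk_eq_mk_of_mul_inv_mem (rels := metacyclicRels' m₀ l n k)
    (x := (.of 0)⁻¹ * .of 1 * .of 0) (y := .of 1 ^ k) (by simp [metacyclicRels'])
  rwa [map_mul, map_mul, map_inv, map_pow] at h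

theorem closure_xgen'_ygen' : Subgroup.closure {xgen' m₀ l n k, ygen' m₀ l n k} = ⊤ := by
  rw [← PresentedGroup.closure_range_of]
  congr 1
  ext g
  simp [Fin.exists_fin_two, xgen', ygen', eq_comm]

variable {m₀ l n}

theorem xgen'_pow_mul_div (hdvd : l ∣ n) : xgen' m₀ l n k ^ (m₀ * n / l) = 1 := by
  rw [Nat.mul_div_assoc m₀ hdvd, pow_mul, xgen'_pow, ← pow_mul, Nat.mul_div_cancel' hdvd,
    ygen'_pow]

end Metacyclic

open Metacyclic in
def splitToMetacyclic (m₀ : ℕ) {l n : ℕ} (k : ℕ) (hdvd : l ∣ n) :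
    SplitMetacyclic (m₀ * n / l) n k →* Metacyclic m₀ l n k :=
  PresentedGroup.toGroup (f := ![xgen' m₀ l n k, ygen' m₀ l n k]) <| by
    rintro r (rfl | rfl | rfl)
    · simpa using xgen'_pow_mul_div k hdvd
    · simpa using ygen'_pow m₀ l n k
    · simpa [mul_inv_eq_one] using inv_xgen'_mul_ygen'_mul_xgen' m₀ l n k

section splitToMetacyclic

variable (m₀ : ℕ) {l n : ℕ} (k : ℕ) (hdvd : l ∣ n)

@[simp]
theorem splitToMetacyclic_xgen : splitToMetacyclic m₀ k hdvd (xgen _ n k) = xgen' m₀ l n k :=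
  PresentedGroup.toGroup.of _

@[simp]
theorem splitToMetacyclic_ygen : splitToMetacyclic m₀ k hdvd (ygen _ n k) = ygen' m₀ l n k :=
  PresentedGroup.toGroup.of _

theorem splitToMetacyclic_surjective : Function.Surjective (splitToMetacyclic m₀ k hdvd) := by
  rw [← MonoidHom.range_eq_top, eq_top_iff, ← Metacyclic.closure_xgen'_ygen', Subgroup.closure_le]
  rintro _ (rfl | rfl)
  · exact ⟨_, splitToMetacyclic_xgen m₀ k hdvd⟩
  · exact ⟨_, splitToMetacyclic_ygen m₀ k hdvd⟩

theorem mapsTo_splitToMetacyclic_genSet :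
    Set.MapsTo (splitToMetacyclic m₀ k hdvd) (genSet _ n k) (genSet' m₀ l n k) := by
  rintro _ (rfl | rfl | rfl | rfl) <;> simp [genSet']

end splitToMetacyclic

theorem metacyclic_quotient_diam_bound_general (m₀ l n k : ℕ) (hm₀ : 0 < m₀)
    (hn : 3 ≤ n) (hdvd : l ∣ n) :
    (∃ f : SplitMetacyclic (m₀ * n / l) n k →* Metacyclic m₀ l n k,
      Function.Surjective f ∧
      f (xgen (m₀ * n / l) n k) = xgen' m₀ l n k ∧
      f (ygen (m₀ * n / l) n k) = ygen' m₀ l n k) ∧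
    diam (genSet' m₀ l n k) ≤ diam (genSet (m₀ * n / l) n k) := by
  have hn₀ : 0 < n := by omega
  have hM : 0 < m₀ * n / l := by
    rw [Nat.mul_div_assoc m₀ hdvd]
    exact Nat.mul_pos hm₀ (Nat.div_pos (Nat.le_of_dvd hn₀ hdvd) (Nat.pos_of_dvd_of_pos hdvd hn₀))
  have := SplitMetacyclic.finite k hM hn₀
  refine ⟨⟨splitToMetacyclic m₀ k hdvd, splitToMetacyclic_surjective m₀ k hdvd,
    splitToMetacyclic_xgen m₀ k hdvd, splitToMetacyclic_ygen m₀ k hdvd⟩, ?_⟩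
  exact diam_le_diam_of_surjective _ (splitToMetacyclic_surjective m₀ k hdvd)
    (mapsTo_splitToMetacyclic_genSet m₀ k hdvd) (SplitMetacyclic.submonoid_closure_genSet _ n k)

/-- There is a surjection `G_{m₀n/ℓ, n, k} ↠ G_{m₀,ℓ,n,k}` sending `x ↦ x` and
`y ↦ y`; consequently `diam(G_{m₀,ℓ,n,k}) ≤ diam(G_{m₀n/ℓ, n, k})`. -/
theorem metacyclic_quotient_diam_bound (m₀ l n k : ℕ) (hm₀ : 0 < m₀)
    (hl : 0 < l) (hn : 3 ≤ n) (hdvd : l ∣ n) (hk : Nat.Coprime k n)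
    (hkm : k ^ m₀ ≡ 1 [MOD n]) (hcond : n ∣ l * (k - 1)) :
    (∃ f : SplitMetacyclic (m₀ * n / l) n k →* Metacyclic m₀ l n k,
      Function.Surjective f ∧
      f (xgen (m₀ * n / l) n k) = xgen' m₀ l n k ∧
      f (ygen (m₀ * n / l) n k) = ygen' m₀ l n k) ∧
    diam (genSet' m₀ l n k) ≤ diam (genSet (m₀ * n / l) n k) :=
  metacyclic_quotient_diam_bound_general m₀ l n k hm₀ hn hdvd
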